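/- On the interval [0, A], the function x ↦ Q(A−x) + Q(A+x) is monotonically increasing, where Q is the Gaussian tail function. -/

import Mathlib

open MeasureTheory Real

noncomputable def gaussPsi (x : ℝ) : ℝ := Real.exp (-x^2/2) / Real.sqrt (2 * Real.pi)

noncomputable def gaussQ (x : ℝ) : ℝ := ∫ z in Set.Ioi x, gaussPsi z

/-! Differentiating `Q(A - x) + Q(A + x)` gives `ψ(A - x) - ψ(A + x)`, which is nonnegative on
`[0, A]` because `0 ≤ A - x ≤ A + x` there and the Gaussian density `ψ` decreases on `[0, ∞)`. -/

theorem hasDerivAt_integral_Ioi {E : Type*} [NormedAddCommGroup E] [NormedSpace ℝ E]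
    [CompleteSpace E] {f : ℝ → E} (hf : Continuous f) (hfi : Integrable f) (x : ℝ) :
    HasDerivAt (fun y => ∫ z in Set.Ioi y, f z) (-f x) x := by
  have htail : (fun y => ∫ z in Set.Ioi y, f z) =
      fun y => (∫ z in Set.Ioi 0, f z) - ∫ z in (0 : ℝ)..y, f z := by
    funext y
    rw [← intervalIntegral.integral_Ioi_sub_Ioi' hfi.integrableOn hfi.integrableOn, sub_sub_cancel]
  rw [htail]
  exact (hf.integral_hasStrictDerivAt 0 x).hasDerivAt.const_sub _

theorem continuous_gaussPsi : Continuous gaussPsi := by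
  unfold gaussPsi
  fun_prop

theorem integrable_gaussPsi : Integrable gaussPsi := by
  refine ((integrable_exp_neg_mul_sq (by norm_num : (0 : ℝ) < 1 / 2)).div_const
    (Real.sqrt (2 * Real.pi))).congr (Filter.Eventually.of_forall fun x => ?_)
  simp only [gaussPsi]
  ring_nf

theorem gaussPsi_antitoneOn : AntitoneOn gaussPsi (Set.Ici 0) := by
  intro a ha b _ hab
  unfold gaussPsi
  gcongr

theorem hasDerivAt_gaussQ (x : ℝ) : HasDerivAt gaussQ (-gaussPsi x) x :=
  hasDerivAt_integral_Ioi continuous_gaussPsi integrable_gaussPsi x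

theorem hasDerivAt_gaussQ_sub_add_gaussQ_add (A x : ℝ) :
    HasDerivAt (fun x => gaussQ (A - x) + gaussQ (A + x))
      (gaussPsi (A - x) - gaussPsi (A + x)) x := by
  have hsub : HasDerivAt (fun x => gaussQ (A - x)) (gaussPsi (A - x)) x := by
    simpa only [neg_neg] using (hasDerivAt_gaussQ (A - x)).comp_const_sub A x
  have hadd : HasDerivAt (fun x => gaussQ (A + x)) (-gaussPsi (A + x)) x :=
    (hasDerivAt_gaussQ (A + x)).comp_const_add A x
  exact hsub.add hadd

theorem Q_sum_mono_general (A : ℝ) :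
    MonotoneOn (fun x => gaussQ (A - x) + gaussQ (A + x)) (Set.Icc 0 A) := by
  have hderiv := hasDerivAt_gaussQ_sub_add_gaussQ_add A
  refine monotoneOn_of_hasDerivWithinAt_nonneg (convex_Icc 0 A)
    (fun x _ => (hderiv x).continuousAt.continuousWithinAt)
    (fun x _ => (hderiv x).hasDerivWithinAt) fun x hx => ?_
  obtain ⟨hx0, hxA⟩ : 0 < x ∧ x < A := by rwa [interior_Icc] at hx
  have hle : A - x ≤ A + x := by linarith
  exact sub_nonneg.2 <| gaussPsi_antitoneOn (sub_nonneg.2 hxA.le)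
    (Set.mem_Ici.2 (by linarith)) hle

theorem Q_sum_mono (A : ℝ) (hA : 0 < A) :
    MonotoneOn (fun x => gaussQ (A - x) + gaussQ (A + x)) (Set.Icc 0 A) :=
  Q_sum_mono_general A
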